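/- Let f : H → (−∞, +∞] be proper and ρ-convex with ρ < 0, and let L : H' → H be an invertible bounded linear operator with bounded inverse. Then A = (−L) ∘ (∂f)⁻¹ ∘ (−L*) is (ρ‖L⁻¹‖²)-comonotone: for all (x,u), (y,v) in the graph of A, ⟨x − y, u − v⟩ ≥ ρ‖L⁻¹‖²‖u − v‖². -/
import Mathlib


open InnerProductSpace

/-- `A` is `σ`-comonotone. -/
def SigmaComonotone {E : Type*} [NormedAddCommGroup E] [InnerProductSpace ℝ E]
    (A : E → Set E) (σ : ℝ) : Prop :=
  ∀ x y u v, u ∈ A x → v ∈ A y → σ * ‖u - v‖ ^ 2 ≤ ⟪x - y, u - v⟫_ℝ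

/-- The subdifferential of a `ρ`-convex function, characterized by the
`ρ`-strong subgradient inequality. -/
def RhoSubdiff {E : Type*} [NormedAddCommGroup E] [InnerProductSpace ℝ E]
    (f : E → EReal) (ρ : ℝ) (x : E) : Set E :=
  {z | ∀ y, f x + ((⟪z, y - x⟫_ℝ + ρ / 2 * ‖y - x‖ ^ 2 : ℝ) : EReal) ≤ f y}

theorem stmt16 {H H' : Type*}
    [NormedAddCommGroup H] [InnerProductSpace ℝ H] [CompleteSpace H]
    [NormedAddCommGroup H'] [InnerProductSpace ℝ H'] [CompleteSpace H']
    (f : H' → EReal) (ρ : ℝ) (hρ : ρ < 0)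
    (hproper : (∃ x, f x ≠ ⊤) ∧ ∀ x, f x ≠ ⊥)
    (hconv : ∀ x y : H', ∀ t : ℝ, 0 ≤ t → t ≤ 1 →
      f (t • x + (1 - t) • y)
        ≤ (t : EReal) * f x + ((1 - t : ℝ) : EReal) * f y
            - ((ρ / 2 * t * (1 - t) * ‖x - y‖ ^ 2 : ℝ) : EReal))
    (L : H' ≃L[ℝ] H) :
    SigmaComonotone
      (fun w : H =>
        {p : H | ∃ c : H',
          (-(ContinuousLinearMap.adjoint (L : H' →L[ℝ] H) w)) ∈ RhoSubdiff f ρ c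
            ∧ p = -(L c)})
      (ρ * ‖(L.symm : H →L[ℝ] H')‖ ^ 2) := by
  intro x y u v hu hv
  obtain ⟨c, hc, rfl⟩ := hu
  obtain ⟨d, hd, rfl⟩ := hv
  obtain ⟨x0, hx0⟩ := hproper.1
  set zc := -(ContinuousLinearMap.adjoint (L : H' →L[ℝ] H) x)
  set zd := -(ContinuousLinearMap.adjoint (L : H' →L[ℝ] H) y)
  have hfc_top : f c ≠ ⊤ := by
    intro h
    have := hc x0
    rw [h] at this
    simp only [EReal.top_add_of_ne_bot (EReal.coe_ne_bot _)] at this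
    exact hx0 (top_le_iff.mp this)
  have hfd_top : f d ≠ ⊤ := by
    intro h
    have := hd x0
    rw [h] at this
    simp only [EReal.top_add_of_ne_bot (EReal.coe_ne_bot _)] at this
    exact hx0 (top_le_iff.mp this)
  lift f c to ℝ using ⟨hfc_top, hproper.2 c⟩ with a ha
  lift f d to ℝ using ⟨hfd_top, hproper.2 d⟩ with b hb
  have h1 : a + (⟪zc, d - c⟫_ℝ + ρ / 2 * ‖d - c‖ ^ 2) ≤ b := by
    have := hc d
    rw [← ha, ← hb] at this
    exact_mod_cast this
  have h2 : b + (⟪zd, c - d⟫_ℝ + ρ / 2 * ‖c - d‖ ^ 2) ≤ a := by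
    have := hd c
    rw [← ha, ← hb] at this
    exact_mod_cast this
  have hnr2 : ‖d - c‖ ^ 2 = ‖c - d‖ ^ 2 := by rw [norm_sub_rev]
  have hmono : ρ * ‖c - d‖ ^ 2 ≤ ⟪zc - zd, c - d⟫_ℝ := by
    have e1 : ⟪zc, c - d⟫_ℝ = -⟪zc, d - c⟫_ℝ := by
      rw [← inner_neg_right]; congr 1; abel
    have e2 : ⟪zd, c - d⟫_ℝ = -⟪zd, d - c⟫_ℝ := by
      rw [← inner_neg_right]; congr 1; abel
    rw [hnr2] at h1
    rw [inner_sub_left, e1, e2]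
    linarith [h1, h2]
  have key : ⟪x - y, -(L c) - -(L d)⟫_ℝ = ⟪zc - zd, c - d⟫_ℝ := by
    show ⟪x - y, -(L c) - -(L d)⟫_ℝ =
      ⟪-(ContinuousLinearMap.adjoint (L : H' →L[ℝ] H) x) -
        -(ContinuousLinearMap.adjoint (L : H' →L[ℝ] H) y), c - d⟫_ℝ
    simp only [inner_sub_left, inner_sub_right, inner_neg_left, inner_neg_right,
      ContinuousLinearMap.adjoint_inner_left, ContinuousLinearEquiv.coe_coe]
    ring
  rw [key]
  have hub : ‖c - d‖ ≤ ‖(L.symm : H →L[ℝ] H')‖ * ‖-(L c) - -(L d)‖ := by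
    rw [norm_sub_rev]
    have hdc : d - c = (L.symm : H →L[ℝ] H') (-(L c) - -(L d)) := by
      simp [map_sub, map_neg]; abel
    rw [hdc]
    exact (L.symm : H →L[ℝ] H').le_opNorm _
  have h0 : (0:ℝ) ≤ ‖c - d‖ := norm_nonneg _
  have hsq : ‖c - d‖ ^ 2 ≤ (‖(L.symm : H →L[ℝ] H')‖ * ‖-(L c) - -(L d)‖) ^ 2 :=
    pow_le_pow_left₀ h0 hub 2
  nlinarith [mul_le_mul_of_nonpos_left hsq hρ.le, hmono]
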